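/- Consider a multi-layer ScBM satisfying Assumption 1 (with constant c0 ≥ 1) and Assumption 2 (with constant c1 > 0), with population matrices P_l = ρ Y B_l Zᵀ and K := rank(Σ_{l=1}^L B_l B_lᵀ). Then there exists a constant c > 0 depending only on c0, c1, K_y, K_z such that the K-th largest eigenvalue of Σ_{l=1}^L P_l P_lᵀ satisfies λ_K( Σ_{l=1}^L P_l P_lᵀ ) ≥ c L n² ρ². In particular, one may take c = c1 / (c0² K_y K_z), via the Loewner bound Σ_l P_l P_lᵀ ⪰ (n/(c0 K_z)) ρ² Y (Σ_l B_l B_lᵀ) Yᵀ. -/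

import Mathlib

/-!
Since `Zᵀ Z` is the diagonal matrix of column-cluster sizes, all at least `n / (c0 Kz)`, each
`P_l P_lᵀ = ρ² (Y B_l) (Zᵀ Z) (Y B_l)ᵀ` dominates `(n / (c0 Kz)) ρ² (Y B_l) (Y B_l)ᵀ`; summing
gives the Loewner bound. For the eigenvalues, map the eigenvectors of `∑ B_l B_lᵀ` with eigenvalue
at least `c1 L` by `Y D_y⁻¹`, a right inverse of `Yᵀ` that multiplies squared norms by at most
`c0 Ky / n`. Together with the Loewner bound, this gives a `K`-dimensional space on which the
Rayleigh quotient of `∑ P_l P_lᵀ` is at least `c1 L n² ρ² / (c0² Ky Kz)`, and the easy half of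
the Courant–Fischer theorem turns it into `K` eigenvalues above that level.
-/

open Matrix Finset
open scoped BigOperators Classical

noncomputable section

/-- Membership matrix associated with a cluster assignment `g`. -/
def memb {n K : ℕ} (g : Fin n → Fin K) : Matrix (Fin n) (Fin K) ℝ :=
  Matrix.of fun i k => if g i = k then 1 else 0

/-- Size of cluster `k` under assignment `g`. -/
def csize {n K : ℕ} (g : Fin n → Fin K) (k : Fin K) : ℕ :=
  (Finset.univ.filter fun i => g i = k).card

namespace Matrix.IsHermitian

variable {n : Type*} [Fintype n] [DecidableEq n] {A : Matrix n n ℝ} (hA : A.IsHermitian)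

theorem sum_dotProduct_eigenvectorBasis_mul (x y : n → ℝ) :
    ∑ i, (x ⬝ᵥ ⇑(hA.eigenvectorBasis i)) * (⇑(hA.eigenvectorBasis i) ⬝ᵥ y) = x ⬝ᵥ y := by
  simpa [EuclideanSpace.inner_eq_star_dotProduct, dotProduct_comm, mul_comm] using
    hA.eigenvectorBasis.sum_inner_mul_inner (WithLp.toLp 2 x) (WithLp.toLp 2 y)

theorem dotProduct_self_eq_sum (x : n → ℝ) :
    x ⬝ᵥ x = ∑ i, (⇑(hA.eigenvectorBasis i) ⬝ᵥ x) ^ 2 := by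
  rw [← hA.sum_dotProduct_eigenvectorBasis_mul]
  simp only [sq, dotProduct_comm x]

theorem dotProduct_mulVec_eq_sum (x : n → ℝ) :
    x ⬝ᵥ A *ᵥ x = ∑ i, hA.eigenvalues i * (⇑(hA.eigenvectorBasis i) ⬝ᵥ x) ^ 2 := by
  rw [← hA.sum_dotProduct_eigenvectorBasis_mul]
  refine Finset.sum_congr rfl fun i _ => ?_
  have hsymm : Aᵀ = A := by simpa [conjTranspose_eq_transpose_of_trivial] using hA.eq
  rw [dotProduct_mulVec, ← mulVec_transpose, hsymm, hA.mulVec_eigenvectorBasis,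
    smul_dotProduct, smul_eq_mul, dotProduct_comm x]
  ring

theorem dotProduct_eigenvectorBasis_eq_zero_of_mem_span {s : Set n} {x : n → ℝ}
    (hx : x ∈ Submodule.span ℝ ((fun i => ⇑(hA.eigenvectorBasis i)) '' s)) {j : n} (hj : j ∉ s) :
    ⇑(hA.eigenvectorBasis j) ⬝ᵥ x = 0 := by
  induction hx using Submodule.span_induction with
  | mem _ hy =>
    obtain ⟨i, hi, rfl⟩ := hy
    have hij : j ≠ i := fun h => hj (h ▸ hi)
    simpa [EuclideanSpace.inner_eq_star_dotProduct, dotProduct_comm] using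
      hA.eigenvectorBasis.orthonormal.2 hij
  | zero => exact dotProduct_zero _
  | add _ _ _ _ hy hz => rw [dotProduct_add, hy, hz, add_zero]
  | smul _ _ _ hy => rw [dotProduct_smul, hy, smul_zero]

theorem linearIndependent_eigenvectorBasis :
    LinearIndependent ℝ fun i => ⇑(hA.eigenvectorBasis i) :=
  hA.eigenvectorBasis.orthonormal.linearIndependent.map'
    (WithLp.linearEquiv 2 ℝ (n → ℝ)).toLinearMap (LinearEquiv.ker _)

theorem finrank_span_eigenvectorBasis (s : Finset n) :
    Module.finrank ℝ (Submodule.span ℝ ((fun i => ⇑(hA.eigenvectorBasis i)) '' s)) = #s := by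
  rw [Set.image_eq_range]
  exact (finrank_span_eq_card (hA.linearIndependent_eigenvectorBasis.comp _
    Subtype.val_injective)).trans (Fintype.card_coe s)

theorem mul_dotProduct_self_le_of_mem_span {t : ℝ} {x : n → ℝ}
    (hx : x ∈ Submodule.span ℝ
      ((fun i => ⇑(hA.eigenvectorBasis i)) '' {i | t ≤ hA.eigenvalues i})) :
    t * (x ⬝ᵥ x) ≤ x ⬝ᵥ A *ᵥ x := by
  rw [hA.dotProduct_mulVec_eq_sum, hA.dotProduct_self_eq_sum, Finset.mul_sum]
  refine Finset.sum_le_sum fun i _ => ?_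
  by_cases hi : t ≤ hA.eigenvalues i
  · exact mul_le_mul_of_nonneg_right hi (sq_nonneg _)
  · simp [hA.dotProduct_eigenvectorBasis_eq_zero_of_mem_span hx hi]

theorem eq_zero_of_mem_span_of_mul_dotProduct_self_le {v : ℝ} {x : n → ℝ}
    (hx : x ∈ Submodule.span ℝ
      ((fun i => ⇑(hA.eigenvectorBasis i)) '' {i | hA.eigenvalues i < v}))
    (hle : v * (x ⬝ᵥ x) ≤ x ⬝ᵥ A *ᵥ x) : x = 0 := by
  set c := fun i => ⇑(hA.eigenvectorBasis i) ⬝ᵥ x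
  have hterm (i) : 0 ≤ (v - hA.eigenvalues i) * c i ^ 2 := by
    by_cases hi : hA.eigenvalues i < v
    · exact mul_nonneg (sub_nonneg.2 hi.le) (sq_nonneg _)
    · simp [c, hA.dotProduct_eigenvectorBasis_eq_zero_of_mem_span hx hi]
  have hsum : ∑ i, (v - hA.eigenvalues i) * c i ^ 2 = 0 := by
    refine le_antisymm ?_ (Finset.sum_nonneg fun i _ => hterm i)
    rw [hA.dotProduct_mulVec_eq_sum, hA.dotProduct_self_eq_sum, Finset.mul_sum] at hle
    simpa [sub_mul] using hle
  have hc (i) : ⇑(hA.eigenvectorBasis i) ⬝ᵥ x = 0 := by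
    by_cases hi : hA.eigenvalues i < v
    · have := (Finset.sum_eq_zero_iff_of_nonneg fun i _ => hterm i).1 hsum i (Finset.mem_univ i)
      simpa [sub_ne_zero.2 hi.ne'] using this
    · exact hA.dotProduct_eigenvectorBasis_eq_zero_of_mem_span hx hi
  rw [← dotProduct_self_eq_zero, hA.dotProduct_self_eq_sum]
  simp [hc]

theorem finrank_le_card_eigenvalues_ge {W : Submodule ℝ (n → ℝ)} {v : ℝ}
    (hW : ∀ x ∈ W, v * (x ⬝ᵥ x) ≤ x ⬝ᵥ A *ᵥ x) :
    Module.finrank ℝ W ≤ #{i | v ≤ hA.eigenvalues i} := by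
  set s : Finset n := {i | v ≤ hA.eigenvalues i}
  have hs : (↑sᶜ : Set n) = {i | hA.eigenvalues i < v} := by ext; simp [s]
  set T : Submodule ℝ (n → ℝ) := Submodule.span ℝ ((fun i => ⇑(hA.eigenvectorBasis i)) '' ↑sᶜ)
  have hdisj : Disjoint W T := Submodule.disjoint_def.2 fun x hxW hxT =>
    hA.eq_zero_of_mem_span_of_mul_dotProduct_self_le (hs ▸ hxT) (hW x hxW)
  have hT : Module.finrank ℝ T = Fintype.card n - #s := by
    rw [hA.finrank_span_eigenvectorBasis, Finset.card_compl]
  have := Submodule.finrank_add_finrank_le_of_disjoint hdisj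
  rw [Module.finrank_pi] at this
  have := Finset.card_le_univ s
  omega

end Matrix.IsHermitian

theorem Matrix.dotProduct_mul_mul_transpose_mulVec {m n : Type*} [Fintype m] [Fintype n]
    (R : Matrix m n ℝ) (S : Matrix n n ℝ) (x : m → ℝ) :
    x ⬝ᵥ (R * S * Rᵀ) *ᵥ x = (Rᵀ *ᵥ x) ⬝ᵥ S *ᵥ (Rᵀ *ᵥ x) := by
  rw [← mulVec_mulVec, ← mulVec_mulVec, dotProduct_mulVec, ← mulVec_transpose]

theorem Matrix.IsHermitian.card_eigenvalues_ge_le {m n : Type*} [Fintype m] [DecidableEq m]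
    [Fintype n] [DecidableEq n] {S : Matrix n n ℝ} (hS : S.IsHermitian) {A : Matrix m m ℝ}
    (hA : A.IsHermitian) {R C : Matrix m n ℝ} (hRC : Rᵀ * C = 1) {β t v : ℝ} (hβ : 0 ≤ β)
    (hAS : (A - β • (R * S * Rᵀ)).PosSemidef)
    (hC : ∀ u, v * (C *ᵥ u ⬝ᵥ C *ᵥ u) ≤ β * t * (u ⬝ᵥ u)) :
    #{i | t ≤ hS.eigenvalues i} ≤ #{j | v ≤ hA.eigenvalues j} := by
  have hCinj : Function.Injective (mulVecLin C) := fun u w h => by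
    simpa [mulVec_mulVec, hRC] using congrArg (Rᵀ *ᵥ ·) h
  rw [← hS.finrank_span_eigenvectorBasis, (Submodule.equivMapOfInjective _ hCinj _).finrank_eq]
  refine hA.finrank_le_card_eigenvalues_ge ?_
  rintro _ ⟨u, hu, rfl⟩
  have hRu : Rᵀ *ᵥ C *ᵥ u = u := by rw [mulVec_mulVec, hRC, one_mulVec]
  have hPSD := hAS.dotProduct_mulVec_nonneg (C *ᵥ u)
  simp only [star_trivial, sub_mulVec, dotProduct_sub, smul_mulVec, dotProduct_smul,
    dotProduct_mul_mul_transpose_mulVec, hRu, smul_eq_mul, sub_nonneg] at hPSD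
  calc v * (C *ᵥ u ⬝ᵥ C *ᵥ u) ≤ β * (t * (u ⬝ᵥ u)) := by rw [← mul_assoc]; exact hC u
    _ ≤ β * (u ⬝ᵥ S *ᵥ u) :=
      mul_le_mul_of_nonneg_left (hS.mul_dotProduct_self_le_of_mem_span (by simpa using hu)) hβ
    _ ≤ C *ᵥ u ⬝ᵥ A *ᵥ C *ᵥ u := hPSD

theorem Matrix.posSemidef_sum_mul_transpose_sub {ι m n p : Type*} [Fintype ι] [Fintype m]
    [Fintype n] [DecidableEq n] [Fintype p] (M : ι → Matrix m n ℝ) (Z : Matrix p n ℝ) {c : ℝ}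
    (hZ : (Zᵀ * Z - c • 1).PosSemidef) :
    (∑ l, M l * Zᵀ * (M l * Zᵀ)ᵀ - c • ∑ l, M l * (M l)ᵀ).PosSemidef := by
  have h : ∑ l, M l * Zᵀ * (M l * Zᵀ)ᵀ - c • ∑ l, M l * (M l)ᵀ
      = ∑ l, M l * (Zᵀ * Z - c • 1) * (M l)ᵀ := by
    simp only [Finset.smul_sum, ← Finset.sum_sub_distrib, Matrix.mul_sub, Matrix.sub_mul,
      transpose_mul, transpose_transpose, Matrix.mul_smul, Matrix.smul_mul, Matrix.mul_one,
      Matrix.mul_assoc]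
  rw [h]
  exact posSemidef_sum _ fun l _ => by
    simpa [conjTranspose_eq_transpose_of_trivial] using hZ.mul_mul_conjTranspose_same (M l)

section Membership

variable {n K : ℕ} (g : Fin n → Fin K)

theorem transpose_memb_mul_memb : (memb g)ᵀ * memb g = diagonal fun k => (csize g k : ℝ) := by
  ext k k'
  simp only [memb, mul_apply, transpose_apply, of_apply, mul_ite, mul_one, mul_zero,
    diagonal_apply, csize]
  split_ifs with h
  · subst h
    simp [Finset.sum_ite, Finset.filter_filter]
  · exact Finset.sum_eq_zero fun i _ => by grind

theorem posSemidef_transpose_memb_mul_memb_sub {c : ℝ} (hc : ∀ k, c ≤ csize g k) :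
    ((memb g)ᵀ * memb g - c • 1).PosSemidef := by
  rw [transpose_memb_mul_memb, smul_one_eq_diagonal, diagonal_sub, posSemidef_diagonal_iff]
  exact fun k => sub_nonneg.2 (hc k)

/-- `Y D⁻¹`, where `D` is the diagonal matrix of cluster sizes; its transpose averages a vector
over each cluster. -/
def clusterAvg : Matrix (Fin n) (Fin K) ℝ :=
  memb g * diagonal fun k => (csize g k : ℝ)⁻¹

theorem transpose_memb_mul_clusterAvg (hg : ∀ k, csize g k ≠ 0) :
    (memb g)ᵀ * clusterAvg g = 1 := by
  rw [clusterAvg, ← Matrix.mul_assoc, transpose_memb_mul_memb, diagonal_mul_diagonal,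
    ← diagonal_one]
  exact congrArg diagonal (funext fun k => mul_inv_cancel₀ (Nat.cast_ne_zero.2 (hg k)))

theorem clusterAvg_mulVec_dotProduct_self_le {a : ℝ} (ha : 0 < a) (hg : ∀ k, a ≤ csize g k)
    (u : Fin K → ℝ) :
    clusterAvg g *ᵥ u ⬝ᵥ clusterAvg g *ᵥ u ≤ a⁻¹ * (u ⬝ᵥ u) := by
  have hpos (k) : 0 < (csize g k : ℝ) := ha.trans_le (hg k)
  have hCC : (clusterAvg g)ᵀ * clusterAvg g = diagonal fun k => (csize g k : ℝ)⁻¹ := by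
    rw [clusterAvg, transpose_mul, diagonal_transpose, Matrix.mul_assoc, ← clusterAvg,
      transpose_memb_mul_clusterAvg g fun k => Nat.cast_ne_zero.1 (hpos k).ne', Matrix.mul_one]
  rw [dotProduct_mulVec, ← mulVec_transpose, mulVec_mulVec, hCC]
  simp only [dotProduct, mulVec_diagonal, Finset.mul_sum]
  refine Finset.sum_le_sum fun k _ => ?_
  calc (csize g k : ℝ)⁻¹ * u k * u k = (csize g k : ℝ)⁻¹ * (u k * u k) := mul_assoc _ _ _
    _ ≤ a⁻¹ * (u k * u k) :=
      mul_le_mul_of_nonneg_right (inv_anti₀ ha (hg k)) (mul_self_nonneg _)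

end Membership

/-- "λ_K(M) ≥ v" is encoded as: at least K eigenvalues of M (with multiplicity) are ≥ v. -/
theorem stmt15_general
    (n L Ky Kz K : ℕ) (hn : 0 < n) (hKy : 0 < Ky)
    (ρ : ℝ)
    (gy : Fin n → Fin Ky) (gz : Fin n → Fin Kz)
    (B : Fin L → Matrix (Fin Ky) (Fin Kz) ℝ)
    (P : Fin L → Matrix (Fin n) (Fin n) ℝ)
    (hP : ∀ l, P l = ρ • (memb gy * B l * (memb gz)ᵀ))
    -- Assumption 1 (balanced clusters) with constant c0 ≥ 1
    (c0 : ℝ) (hc0 : 1 ≤ c0)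
    (hbalY : ∀ k, (n : ℝ) / (c0 * Ky) ≤ (csize gy k : ℝ) ∧ (csize gy k : ℝ) ≤ c0 * n / Ky)
    (hbalZ : ∀ k, (n : ℝ) / (c0 * Kz) ≤ (csize gz k : ℝ) ∧ (csize gz k : ℝ) ≤ c0 * n / Kz)
    -- Assumption 2: K = rank(∑ B_l B_lᵀ) and λ_K(∑ B_l B_lᵀ) ≥ c1·L with c1 > 0
    (c1 : ℝ) (hc1 : 0 < c1)
    (hBH : (∑ l, B l * (B l)ᵀ).IsHermitian)
    (hA2 : K ≤ (Finset.univ.filter fun a : Fin Ky => c1 * L ≤ hBH.eigenvalues a).card)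
    (hPH : (∑ l, P l * (P l)ᵀ).IsHermitian) :
    -- the Loewner bound ∑ P_l P_lᵀ ⪰ (n/(c0 K_z)) ρ² Y (∑ B_l B_lᵀ) Yᵀ
    (∑ l, P l * (P l)ᵀ -
      ((n : ℝ) / (c0 * Kz) * ρ ^ 2) • (memb gy * (∑ l, B l * (B l)ᵀ) * (memb gy)ᵀ)).PosSemidef ∧
    -- λ_K(∑ P_l P_lᵀ) ≥ (c1/(c0² K_y K_z)) L n² ρ²
    K ≤ (Finset.univ.filter fun i : Fin n =>
      c1 / (c0 ^ 2 * Ky * Kz) * L * (n : ℝ) ^ 2 * ρ ^ 2 ≤ hPH.eigenvalues i).card := by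
  have hnY : 0 < (n : ℝ) / (c0 * Ky) := by positivity
  have hLoewner : (∑ l, P l * (P l)ᵀ -
      ((n : ℝ) / (c0 * Kz) * ρ ^ 2) • (memb gy * (∑ l, B l * (B l)ᵀ) * (memb gy)ᵀ)).PosSemidef := by
    convert posSemidef_sum_mul_transpose_sub (fun l => ρ • (memb gy * B l)) (memb gz)
      (posSemidef_transpose_memb_mul_memb_sub gz fun k => (hbalZ k).1) using 2
    · simp [hP, Matrix.smul_mul]
    · simp only [Matrix.mul_sum, Matrix.sum_mul, Finset.smul_sum, transpose_smul, transpose_mul,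
        Matrix.smul_mul, Matrix.mul_smul, smul_smul, Matrix.mul_assoc]
      refine Finset.sum_congr rfl fun l _ => ?_
      ring_nf
  refine ⟨hLoewner, hA2.trans (hBH.card_eigenvalues_ge_le hPH
    (transpose_memb_mul_clusterAvg gy fun k => ?_) (by positivity) hLoewner fun u => ?_)⟩
  · exact_mod_cast (hnY.trans_le (hbalY k).1).ne'
  · calc _ ≤ c1 / (c0 ^ 2 * Ky * Kz) * L * (n : ℝ) ^ 2 * ρ ^ 2 * ((n / (c0 * Ky))⁻¹ * (u ⬝ᵥ u)) :=
          mul_le_mul_of_nonneg_left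
            (clusterAvg_mulVec_dotProduct_self_le gy hnY (fun k => (hbalY k).1) u) (by positivity)
      _ = _ := by field_simp

/-- lower bound λ_K(∑ P_l P_lᵀ) ≥ c L n² ρ² with
c = c1/(c0² K_y K_z), together with the Loewner bound
∑ P_l P_lᵀ ⪰ (n/(c0 K_z)) ρ² Y (∑ B_l B_lᵀ) Yᵀ.
"λ_K(M) ≥ v" is encoded as: at least K eigenvalues of M (with multiplicity)
are ≥ v. -/
theorem stmt15
    (n L Ky Kz K : ℕ) (hn : 0 < n) (hL : 0 < L) (hKy : 0 < Ky) (hKz : 0 < Kz)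
    (ρ : ℝ) (hρ0 : 0 < ρ) (hρ1 : ρ ≤ 1)
    (gy : Fin n → Fin Ky) (gz : Fin n → Fin Kz)
    (B : Fin L → Matrix (Fin Ky) (Fin Kz) ℝ)
    (hB : ∀ l a b, 0 ≤ B l a b ∧ B l a b ≤ 1)
    (P : Fin L → Matrix (Fin n) (Fin n) ℝ)
    (hP : ∀ l, P l = ρ • (memb gy * B l * (memb gz)ᵀ))
    -- Assumption 1 (balanced clusters) with constant c0 ≥ 1
    (c0 : ℝ) (hc0 : 1 ≤ c0)
    (hbalY : ∀ k, (n : ℝ) / (c0 * Ky) ≤ (csize gy k : ℝ) ∧ (csize gy k : ℝ) ≤ c0 * n / Ky)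
    (hbalZ : ∀ k, (n : ℝ) / (c0 * Kz) ≤ (csize gz k : ℝ) ∧ (csize gz k : ℝ) ≤ c0 * n / Kz)
    -- Assumption 2: K = rank(∑ B_l B_lᵀ) and λ_K(∑ B_l B_lᵀ) ≥ c1·L with c1 > 0
    (c1 : ℝ) (hc1 : 0 < c1)
    (hKrank : (∑ l, B l * (B l)ᵀ).rank = K)
    (hBH : (∑ l, B l * (B l)ᵀ).IsHermitian)
    (hA2 : K ≤ (Finset.univ.filter fun a : Fin Ky => c1 * L ≤ hBH.eigenvalues a).card)
    (hPH : (∑ l, P l * (P l)ᵀ).IsHermitian) :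
    -- the Loewner bound ∑ P_l P_lᵀ ⪰ (n/(c0 K_z)) ρ² Y (∑ B_l B_lᵀ) Yᵀ
    (∑ l, P l * (P l)ᵀ -
      ((n : ℝ) / (c0 * Kz) * ρ ^ 2) • (memb gy * (∑ l, B l * (B l)ᵀ) * (memb gy)ᵀ)).PosSemidef ∧
    -- λ_K(∑ P_l P_lᵀ) ≥ (c1/(c0² K_y K_z)) L n² ρ²
    K ≤ (Finset.univ.filter fun i : Fin n =>
      c1 / (c0 ^ 2 * Ky * Kz) * L * (n : ℝ) ^ 2 * ρ ^ 2 ≤ hPH.eigenvalues i).card :=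
  stmt15_general n L Ky Kz K hn hKy ρ gy gz B P hP c0 hc0 hbalY hbalZ c1 hc1 hBH hA2 hPH
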